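/- arXiv:2602.06199 — 2 statements merged into one kernel-verified Lean document; each statement's English description precedes it below -/
import Mathlib

section
/- For Δ > 0 define c_Δ^± = (e^{πΔ/2} ∓ e^{−πΔ/2})² and extend h_Δ^± to complex z by h_Δ^±(z) = ((1/2)/(1/4 + z²)) · (e^{πΔ} + e^{−πΔ} − 2 cos(2πΔz))/c_Δ^±. Then for every Δ ≥ 1/2 and every nonzero real t one has |h_Δ^±(t + i/2) + h_Δ^±(t − i/2)| ≤ 3.4/t² (for each fixed choice of sign, + or −, taken consistently). -/
open Complex

noncomputable def poissonExtremal (Δ ε : ℝ) (z : ℂ) : ℂ :=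
  ((1 / 2) / (1 / 4 + z ^ 2)) *
    (((Real.exp (Real.pi * Δ) : ℂ) + (Real.exp (-(Real.pi * Δ)) : ℂ)
        - 2 * Complex.cos (2 * Real.pi * Δ * z)) /
      (((Real.exp (Real.pi * Δ / 2) - ε * Real.exp (-(Real.pi * Δ / 2))) ^ 2 : ℝ) : ℂ))

lemma abs_cos_le_cosh_im (w : ℂ) :
    ‖Complex.cos w‖ ≤ (Real.exp w.im + Real.exp (-w.im)) / 2 := by
  rw [Complex.cos]
  calc ‖(Complex.exp (w * I) + Complex.exp (-w * I)) / 2‖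
      ≤ (‖Complex.exp (w * I)‖ + ‖Complex.exp (-w * I)‖) / 2 := by
        rw [norm_div, Complex.norm_two]
        gcongr
        exact norm_add_le _ _
    _ = _ := by
        rw [Complex.norm_exp, Complex.norm_exp]
        simp only [Complex.mul_re, Complex.I_re, Complex.I_im, Complex.neg_re, Complex.neg_im]
        ring

set_option maxHeartbeats 1000000 in
/-- For `Δ ≥ 1/2` and nonzero real `t`, for each fixed choice of sign
`ε = ±1`, one has `|h_Δ^±(t + i/2) + h_Δ^±(t − i/2)| ≤ 3.4/t²`. -/
theorem poissonExtremal_shifted_bound (Δ t ε : ℝ) (hε : ε = 1 ∨ ε = -1) (hΔ : 1 / 2 ≤ Δ)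
    (ht : t ≠ 0) :
    ‖poissonExtremal Δ ε (t + I / 2) + poissonExtremal Δ ε (t - I / 2)‖ ≤
      3.4 / t ^ 2 := by
  have hπ : (3.14159 : ℝ) ≤ Real.pi := by linarith [Real.pi_gt_d6]
  set Y : ℝ := Real.exp (Real.pi * Δ) with hYdef
  set X : ℝ := Real.exp (Real.pi * Δ / 2) with hXdef
  have hXpos : 0 < X := Real.exp_pos _
  have hYpos : 0 < Y := Real.exp_pos _
  have hXX : X * X = Y := by rw [hXdef, hYdef, ← Real.exp_add]; ring_nf
  have hYi : Y * Y⁻¹ = 1 := mul_inv_cancel₀ (ne_of_gt hYpos)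
  have hY : (4.75 : ℝ) ≤ Y := by
    have h1 : Real.exp (1.5707 : ℝ) ≤ Y := by
      apply Real.exp_le_exp.2; nlinarith
    have he : (2.7182818 : ℝ) ≤ Real.exp 1 := by linarith [Real.exp_one_gt_d9]
    have hsq : Real.exp (0.5 : ℝ) * Real.exp (0.5 : ℝ) = Real.exp 1 := by
      rw [← Real.exp_add]; norm_num
    have hh : (1.6487 : ℝ) ≤ Real.exp (0.5 : ℝ) := by
      nlinarith [Real.exp_pos (0.5 : ℝ)]
    have h3 : (1.0707 : ℝ) ≤ Real.exp (0.0707 : ℝ) := by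
      linarith [Real.add_one_le_exp (0.0707 : ℝ)]
    have h4 : Real.exp (1.5707 : ℝ)
        = Real.exp 1 * Real.exp (0.5 : ℝ) * Real.exp (0.0707 : ℝ) := by
      rw [← Real.exp_add, ← Real.exp_add]; norm_num
    have hab : (2.7182818 : ℝ) * 1.6487 ≤ Real.exp 1 * Real.exp (0.5 : ℝ) :=
      mul_le_mul he hh (by norm_num) (Real.exp_pos 1).le
    have habd : (2.7182818 : ℝ) * 1.6487 * 1.0707
        ≤ Real.exp 1 * Real.exp (0.5 : ℝ) * Real.exp (0.0707 : ℝ) :=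
      mul_le_mul (by linarith) h3 (by norm_num)
        (by positivity)
    nlinarith
  have hXinv : Real.exp (-(Real.pi * Δ / 2)) = X⁻¹ := Real.exp_neg _
  set c : ℝ := (Real.exp (Real.pi * Δ / 2) - ε * Real.exp (-(Real.pi * Δ / 2))) ^ 2 with hcdef
  have hcge : Y - 2 + Y⁻¹ ≤ c := by
    have hXi : X * X⁻¹ = 1 := mul_inv_cancel₀ (ne_of_gt hXpos)
    have hinv : Y⁻¹ = X⁻¹ * X⁻¹ := by
      rw [← hXX, mul_inv]
    rw [hcdef, hXinv, ← hXdef]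
    rcases hε with h | h <;> rw [h] <;> nlinarith
  have hcpos : 0 < c := by nlinarith
  have ht2 : (0 : ℝ) < t ^ 2 := by positivity
  -- per-term bound
  have key : ∀ s : ℝ, s = 1 ∨ s = -1 →
      ‖poissonExtremal Δ ε (↑t + ↑s * I / 2)‖ ≤ (Y + Y⁻¹) / (t ^ 2 * c) := by
    intro s hs
    have hs2 : (s : ℂ) ^ 2 = 1 := by rcases hs with h | h <;> rw [h] <;> norm_num
    have hden : (1 / 4 : ℂ) + (↑t + ↑s * I / 2) ^ 2 = ↑t * (↑t + ↑s * I) := by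
      linear_combination (I ^ 2 / 4) * hs2 + ((1 : ℂ) / 4) * Complex.I_sq
    have habs1 : t ^ 2 ≤ ‖(1 / 4 : ℂ) + (↑t + ↑s * I / 2) ^ 2‖ := by
      rw [hden, norm_mul]
      have h1 : ‖(↑t : ℂ)‖ = |t| := by rw [Complex.norm_real, Real.norm_eq_abs]
      have h2 : |t| ≤ ‖↑t + ↑s * I‖ := by
        have : ‖↑t + ↑s * I‖ ^ 2 = t ^ 2 + s ^ 2 := by
          rw [Complex.sq_norm, Complex.normSq_apply]
          simp [Complex.add_re, Complex.add_im, Complex.mul_re, Complex.mul_im]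
          ring
        nlinarith [norm_nonneg (↑t + ↑s * I), abs_nonneg t, _root_.sq_abs t]
      calc t ^ 2 = |t| * |t| := by rw [← _root_.sq_abs]; ring
        _ ≤ |t| * ‖↑t + ↑s * I‖ := by
            apply mul_le_mul_of_nonneg_left h2 (abs_nonneg t)
        _ = _ := by rw [h1]
    -- numerator bound
    have hwim : ((2 : ℂ) * ↑Real.pi * ↑Δ * (↑t + ↑s * I / 2)).im = Real.pi * Δ * s := by
      rcases hs with h | h <;> rw [h] <;> simp [Complex.mul_im, Complex.mul_re] <;> ring
    have hcos : ‖Complex.cos (2 * ↑Real.pi * ↑Δ * (↑t + ↑s * I / 2))‖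
        ≤ (Y + Y⁻¹) / 2 := by
      refine le_trans (abs_cos_le_cosh_im _) ?_
      rw [hwim]
      rcases hs with h | h <;> rw [h] <;>
        simp only [mul_one, mul_neg_one, neg_neg, ← Real.exp_neg] <;>
        rw [hYdef] <;> rw [← Real.exp_neg] <;> linarith
    have hnum : ‖((Y : ℝ) : ℂ) + ((Real.exp (-(Real.pi * Δ)) : ℝ) : ℂ)
        - 2 * Complex.cos (2 * ↑Real.pi * ↑Δ * (↑t + ↑s * I / 2))‖ ≤ 2 * (Y + Y⁻¹) := by
      have hYinv : Real.exp (-(Real.pi * Δ)) = Y⁻¹ := by rw [hYdef, ← Real.exp_neg]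
      calc ‖_‖ ≤ ‖((Y : ℝ) : ℂ) + ((Real.exp (-(Real.pi * Δ)) : ℝ) : ℂ)‖
            + ‖2 * Complex.cos (2 * ↑Real.pi * ↑Δ * (↑t + ↑s * I / 2))‖ :=
          norm_sub_le _ _
        _ ≤ (Y + Y⁻¹) + 2 * ((Y + Y⁻¹) / 2) := by
            apply add_le_add
            · rw [hYinv]
              calc ‖((Y : ℝ) : ℂ) + ((Y⁻¹ : ℝ) : ℂ)‖
                  ≤ ‖((Y : ℝ) : ℂ)‖ + ‖((Y⁻¹ : ℝ) : ℂ)‖ :=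
                    norm_add_le _ _
                _ = Y + Y⁻¹ := by
                    rw [Complex.norm_real, Complex.norm_real, Real.norm_eq_abs, Real.norm_eq_abs,
                      abs_of_pos hYpos, abs_of_pos (by positivity)]
            · rw [norm_mul, Complex.norm_two]
              linarith [hcos]
        _ = 2 * (Y + Y⁻¹) := by ring
    -- assemble
    have hdenpos : (0 : ℝ) < ‖(1 / 4 : ℂ) + (↑t + ↑s * I / 2) ^ 2‖ :=
      lt_of_lt_of_le ht2 habs1
    rw [poissonExtremal]
    rw [norm_mul, norm_div
      (((Real.exp (Real.pi * Δ) : ℂ)) + ((Real.exp (-(Real.pi * Δ)) : ℂ))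
        - 2 * Complex.cos (2 * ↑Real.pi * ↑Δ * (↑t + ↑s * I / 2)))]
    rw [Complex.norm_real, Real.norm_eq_abs, ← hcdef, abs_of_pos hcpos]
    have h12 : ‖(1 / 2 : ℂ) / ((1 / 4 : ℂ) + (↑t + ↑s * I / 2) ^ 2)‖
        = (1 / 2) / ‖(1 / 4 : ℂ) + (↑t + ↑s * I / 2) ^ 2‖ := by
      rw [norm_div]; norm_num
    rw [h12, div_mul_div_comm]
    apply div_le_div₀ (by positivity) (by linarith) (by positivity)
    exact mul_le_mul_of_nonneg_right habs1 hcpos.le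
  -- put the two terms together
  have e1 : (↑t + I / 2 : ℂ) = ↑t + ↑(1 : ℝ) * I / 2 := by norm_num
  have e2 : (↑t - I / 2 : ℂ) = ↑t + ↑(-1 : ℝ) * I / 2 := by push_cast; ring
  have k1 := key 1 (Or.inl rfl)
  have k2 := key (-1) (Or.inr rfl)
  rw [← e1] at k1
  rw [← e2] at k2
  calc ‖poissonExtremal Δ ε (↑t + I / 2) + poissonExtremal Δ ε (↑t - I / 2)‖
      ≤ ‖poissonExtremal Δ ε (↑t + I / 2)‖
        + ‖poissonExtremal Δ ε (↑t - I / 2)‖ := norm_add_le _ _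
    _ ≤ (Y + Y⁻¹) / (t ^ 2 * c) + (Y + Y⁻¹) / (t ^ 2 * c) := add_le_add k1 k2
    _ = (2 * (Y + Y⁻¹)) / (t ^ 2 * c) := by ring
    _ ≤ 3.4 / t ^ 2 := by
        rw [div_le_div_iff₀ (by positivity) ht2]
        have hYinvpos : (0 : ℝ) < Y⁻¹ := by positivity
        have hkey : 2 * (Y + Y⁻¹) ≤ 3.4 * c := by nlinarith [sq_nonneg (Y - 4.75)]
        nlinarith [mul_le_mul_of_nonneg_right hkey ht2.le]
end

section
/- For all real x ≥ 81 and all real t one has Re Σ_{n ≤ x} Λ(n) n^{−it} ( 1/(n log n) − 1/(x log x) ) ≥ Σ_{p, k : p^k ≤ x} (log p) · (−1)^k · ( 1/(p^k log p^k) − 1/(x log x) ), where the sum on the right runs over all primes p and integers k ≥ 1 with p^k ≤ x. -/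
open Complex

open Finset


lemma tail_strong (q : ℝ) (hq : 2 ≤ q) (n : ℕ) (hn : 1 ≤ n) :
    ∀ K : ℕ, n - 1 ≤ K →
      ∑ k ∈ Icc n K, (k : ℝ) / q ^ k
        ≤ ((n : ℝ) + 1/(q-1)) / (q ^ (n-1) * (q-1)) - ((K:ℝ) + 1 + 1/(q-1)) / (q ^ K * (q-1)) := by
  have hq1 : (1:ℝ) < q := by linarith
  have hq0 : (0:ℝ) < q - 1 := by linarith
  intro K hK0
  induction K, hK0 using Nat.le_induction with
  | base =>
      rw [Finset.Icc_eq_empty (by omega : ¬ n ≤ n - 1), Finset.sum_empty]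
      have : ((n:ℝ) - 1) + 1 + 1/(q-1) = (n:ℝ) + 1/(q-1) := by ring
      rw [Nat.cast_sub hn]
      push_cast
      ring_nf
      linarith [le_refl (0:ℝ)]
  | succ K hK ih =>
      rw [Finset.sum_Icc_succ_top (by omega : n ≤ K + 1)]
      have hpK : (0:ℝ) < q ^ K := by positivity
      have key : ((K:ℝ) + 1) / q ^ (K+1)
          = ((K:ℝ) + 1 + 1/(q-1)) / (q ^ K * (q-1)) - ((K+1:ℝ) + 1 + 1/(q-1)) / (q ^ (K+1) * (q-1)) := by
        rw [pow_succ]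
        field_simp
        ring
      push_cast
      push_cast at ih key
      linarith

lemma tail_bound (q : ℝ) (hq : 2 ≤ q) (n : ℕ) (hn : 1 ≤ n) (K : ℕ) :
    ∑ k ∈ Icc n K, (k : ℝ) / q ^ k ≤ ((n : ℝ) + 1/(q-1)) / (q ^ (n-1) * (q-1)) := by
  have hq0 : (0:ℝ) < q - 1 := by linarith
  rcases le_or_gt n K with h | h
  · have := tail_strong q hq n hn K (by omega)
    have hcor : (0:ℝ) ≤ ((K:ℝ) + 1 + 1/(q-1)) / (q ^ K * (q-1)) := by positivity
    linarith
  · rw [Finset.Icc_eq_empty (by omega), Finset.sum_empty]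
    positivity

lemma sin_sq_nat_mul_le (u : ℝ) : ∀ k : ℕ, Real.sin (k * u) ^ 2 ≤ k ^ 2 * Real.sin u ^ 2 := by
  have habs : ∀ k : ℕ, |Real.sin (k * u)| ≤ k * |Real.sin u| := by
    intro k
    induction k with
    | zero => simp
    | succ k ih =>
        have : ((k:ℝ)+1) * u = k * u + u := by ring
        push_cast
        rw [this, Real.sin_add]
        calc |Real.sin (k*u) * Real.cos u + Real.cos (k*u) * Real.sin u|
            ≤ |Real.sin (k*u) * Real.cos u| + |Real.cos (k*u) * Real.sin u| := abs_add_le _ _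
          _ ≤ |Real.sin (k*u)| + |Real.sin u| := by
              rw [abs_mul, abs_mul]
              have h1 := Real.abs_cos_le_one u
              have h2 := Real.abs_cos_le_one ((k:ℝ)*u)
              have h3 := abs_nonneg (Real.sin ((k:ℝ)*u))
              have h4 := abs_nonneg (Real.sin u)
              nlinarith
          _ ≤ (k:ℝ) * |Real.sin u| + |Real.sin u| := by linarith
          _ = ((k:ℝ)+1) * |Real.sin u| := by ring
  intro k
  have h := habs k
  have h1 := abs_nonneg (Real.sin ((k:ℝ)*u))
  have := _root_.sq_abs (Real.sin ((k:ℝ)*u))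
  have := _root_.sq_abs (Real.sin u)
  nlinarith [Nat.cast_nonneg (α := ℝ) k]

lemma sin_five_mul (u : ℝ) :
    Real.sin (5 * u) = Real.sin u * (16 * Real.sin u ^ 4 - 20 * Real.sin u ^ 2 + 5) := by
  rw [show (5:ℝ) * u = 3*u + 2*u by ring, Real.sin_add, Real.sin_three_mul, Real.cos_three_mul,
    Real.sin_two_mul, Real.cos_two_mul]
  linear_combination (8*Real.sin u*Real.cos u^2 + 8*Real.sin u - 16*Real.sin u^3) * (Real.sin_sq_add_cos_sq u)

lemma poly2 (s c : ℝ) (hs0 : 0 ≤ s) (hs1 : s ≤ 1) (hc0 : 0 ≤ c) (hc1 : c ≤ 1/324) :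
    0 ≤ (1/2-c)*s - (1/2)*(s*(1-s)) + (1/24-c)*(s*(3-4*s)^2) - (1/4)*(s*(1-s)*(1-2*s)^2)
      + (1/160-c)*(s*(16*s^2-20*s+5)^2) - (1/96)*(s*(3-4*s)^2) - (9/128)*s := by
  nlinarith [mul_nonneg hs0 hs0, sq_nonneg (1-s), sq_nonneg s, mul_nonneg (mul_nonneg hs0 hs0) hs0,
    sq_nonneg (s-1/2), sq_nonneg (s*(s-1)), mul_nonneg hs0 (sq_nonneg (1-2*s)),
    mul_nonneg hs0 (sq_nonneg (16*s^2-20*s+5)), mul_nonneg hc0 hs0, sq_nonneg (s-1),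
    mul_nonneg (mul_nonneg hs0 hs0) (sq_nonneg (1-s))]

lemma sin_sq_two_mul (u : ℝ) :
    Real.sin (2*u)^2 = 4*(Real.sin u^2*(1-Real.sin u^2)) := by
  rw [Real.sin_two_mul]
  have := Real.sin_sq_add_cos_sq u
  nlinarith [this]

lemma sin_sq_three_mul (u : ℝ) :
    Real.sin (3*u)^2 = Real.sin u^2*(3-4*Real.sin u^2)^2 := by
  rw [Real.sin_three_mul]; ring

lemma sin_sq_four_mul (u : ℝ) :
    Real.sin (4*u)^2 = 16*(Real.sin u^2*(1-Real.sin u^2)*(1-2*Real.sin u^2)^2) := by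
  have h4 : (4:ℝ)*u = 2*(2*u) := by ring
  rw [h4, Real.sin_two_mul]
  have hc2 : Real.cos (2*u) = 1 - 2*Real.sin u^2 := by
    rw [Real.cos_two_mul]
    have := Real.sin_sq_add_cos_sq u
    linarith
  rw [hc2]
  calc (2*Real.sin (2*u)*(1-2*Real.sin u^2))^2
      = Real.sin (2*u)^2 * (4*(1-2*Real.sin u^2)^2) := by ring
    _ = 16*(Real.sin u^2*(1-Real.sin u^2)*(1-2*Real.sin u^2)^2) := by
        rw [sin_sq_two_mul]; ring

lemma sin_sq_five_mul (u : ℝ) :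
    Real.sin (5*u)^2 = Real.sin u^2*(16*(Real.sin u^2)^2-20*Real.sin u^2+5)^2 := by
  rw [sin_five_mul]; ring

lemma sin_sq_six_le (u : ℝ) :
    Real.sin (6*u)^2 ≤ 4*(Real.sin u^2*(3-4*Real.sin u^2)^2) := by
  have h6 : (6:ℝ)*u = 2*(3*u) := by ring
  rw [h6, Real.sin_two_mul]
  have h1 := Real.cos_sq_le_one (3*u)
  have h2 := sq_nonneg (Real.sin (3*u))
  calc (2*Real.sin (3*u)*Real.cos (3*u))^2 = 4*Real.sin (3*u)^2*Real.cos (3*u)^2 := by ring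
    _ ≤ 4*Real.sin (3*u)^2 := by nlinarith
    _ = 4*(Real.sin u^2*(3-4*Real.sin u^2)^2) := by rw [sin_sq_three_mul]

lemma p5_num (q : ℝ) (hq : 5 ≤ q) : (2+1/(q-1))/(q*(q-1)) ≤ 1/q - 1/q^2 := by
  have h0 : (0:ℝ) < q := by linarith
  have h1 : (0:ℝ) < q-1 := by linarith
  rw [← sub_nonneg]
  have key : 1/q - 1/q^2 - (2+1/(q-1))/(q*(q-1)) = (q^3-5*q^2+4*q-1)/(q^2*(q-1)^2) := by
    field_simp
    ring
  rw [key]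
  apply div_nonneg
  · nlinarith
  · positivity

set_option maxHeartbeats 1600000 in
lemma keyPrime (p K : ℕ) (hp : p = 2 ∨ p = 3 ∨ 5 ≤ p) (x u : ℝ) (hx : 81 ≤ x)
    (hiff : ∀ k : ℕ, 1 ≤ k → ((p:ℝ)^k ≤ x ↔ k ≤ K)) :
    0 ≤ ∑ k ∈ Icc 1 K,
      (1/((k:ℝ)*(p:ℝ)^k) - Real.log p * (1/(x*Real.log x))) * (-1:ℝ)^(k+1) * Real.sin ((k:ℝ)*u)^2 := by
  have hp2 : 2 ≤ p := by rcases hp with h|h|h <;> omega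
  have hpR : (2:ℝ) ≤ (p:ℝ) := by exact_mod_cast hp2
  have hx1 : (1:ℝ) < x := by linarith
  have hlogx : 0 < Real.log x := Real.log_pos hx1
  have hxlx : (0:ℝ) < x * Real.log x := by positivity
  have hlogp : 0 < Real.log p := Real.log_pos (by linarith)
  obtain ⟨c, hc⟩ : ∃ c : ℝ, c = 1/(x*Real.log x) := ⟨_, rfl⟩
  have hc0 : 0 ≤ c := by rw [hc]; positivity
  obtain ⟨s, hsdef⟩ : ∃ s : ℝ, s = Real.sin u ^ 2 := ⟨_, rfl⟩
  have hs0 : 0 ≤ s := hsdef ▸ sq_nonneg _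
  have hs1 : s ≤ 1 := hsdef ▸ Real.sin_sq_le_one u
  obtain ⟨W, hWdef⟩ : ∃ W : ℕ → ℝ, W = fun k : ℕ => 1/((k:ℝ)*(p:ℝ)^k) - Real.log p * c := ⟨_, rfl⟩
  have hpk0 : ∀ k : ℕ, 1 ≤ k → (0:ℝ) < (k:ℝ)*(p:ℝ)^k := by
    intro k hk
    have : (0:ℝ) < (k:ℝ) := by exact_mod_cast hk
    positivity
  have hW0 : ∀ k : ℕ, 1 ≤ k → k ≤ K → 0 ≤ W k := by
    intro k hk hkK
    have hpkx : (p:ℝ)^k ≤ x := (hiff k hk).2 hkK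
    have hpk1 : (1:ℝ) ≤ (p:ℝ)^k := one_le_pow₀ (by linarith : (1:ℝ) ≤ (p:ℝ))
    have hlogpk : Real.log ((p:ℝ)^k) ≤ Real.log x := Real.log_le_log (by linarith) hpkx
    rw [Real.log_pow] at hlogpk
    have hkR : (1:ℝ) ≤ (k:ℝ) := by exact_mod_cast hk
    have hmul : Real.log p * ((k:ℝ)*(p:ℝ)^k) ≤ x * Real.log x := by
      have h1 : (k:ℝ) * Real.log p ≤ Real.log x := hlogpk
      have h2 : (0:ℝ) ≤ (k:ℝ) * Real.log p := by positivity
      calc Real.log p * ((k:ℝ)*(p:ℝ)^k) = ((k:ℝ) * Real.log p) * (p:ℝ)^k := by ring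
        _ ≤ Real.log x * x := by
            apply mul_le_mul h1 hpkx (by linarith) (le_of_lt hlogx)
        _ = x * Real.log x := by ring
    have hkpk := hpk0 k hk
    rw [hWdef]
    simp only [sub_nonneg, hc]
    rw [mul_one_div, div_le_div_iff₀ hxlx hkpk]
    linarith
  have hWub : ∀ k : ℕ, W k ≤ 1/((k:ℝ)*(p:ℝ)^k) := by
    intro k
    have : 0 ≤ Real.log p * c := by positivity
    simp only [hWdef]
    linarith
  have hterm : ∀ k : ℕ, 1 ≤ k → k ≤ K →
      -((k:ℝ)/(p:ℝ)^k * s) ≤ W k * (-1:ℝ)^(k+1) * Real.sin ((k:ℝ)*u)^2 := by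
    intro k hk hkK
    have h1 := hW0 k hk hkK
    have h2 := hWub k
    have h3 := sin_sq_nat_mul_le u k
    rw [← hsdef] at h3
    have h4 : W k * Real.sin ((k:ℝ)*u)^2 ≤ (k:ℝ)/(p:ℝ)^k * s := by
      calc W k * Real.sin ((k:ℝ)*u)^2 ≤ (1/((k:ℝ)*(p:ℝ)^k)) * ((k:ℝ)^2 * s) := by
            apply mul_le_mul h2 h3 (sq_nonneg _) (by positivity)
        _ = (k:ℝ)/(p:ℝ)^k * s * ((k:ℝ)/(k:ℝ)) := by ring
        _ = (k:ℝ)/(p:ℝ)^k * s := by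
            rw [div_self (by exact_mod_cast Nat.one_le_iff_ne_zero.1 hk : (k:ℝ) ≠ 0), mul_one]
    rcases Nat.even_or_odd k with he | ho
    · have : (-1:ℝ)^(k+1) = -1 := by
        rcases he with ⟨m, hm⟩
        rw [hm]; rw [show m + m + 1 = 2*m+1 by ring, pow_succ, pow_mul]
        norm_num
      rw [this]
      nlinarith [sq_nonneg (Real.sin ((k:ℝ)*u))]
    · have : (-1:ℝ)^(k+1) = 1 := by
        rcases ho with ⟨m, hm⟩
        rw [hm]; rw [show 2*m + 1 + 1 = 2*(m+1) by ring, pow_mul]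
        norm_num
      rw [this, mul_one]
      have : 0 ≤ W k * Real.sin ((k:ℝ)*u)^2 := mul_nonneg h1 (sq_nonneg _)
      have h5 : 0 ≤ (k:ℝ)/(p:ℝ)^k * s := by positivity
      exact le_trans (neg_nonpos.mpr h5) this
  have hterm2 : ∀ k : ℕ, 1 ≤ k → k ≤ K →
      (if Even k then -((k:ℝ)/(p:ℝ)^k * s) else 0) ≤ W k * (-1:ℝ)^(k+1) * Real.sin ((k:ℝ)*u)^2 := by
    intro k hk hkK
    by_cases he : Even k
    · simpa [he] using hterm k hk hkK
    · simp only [he, if_false]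
      have hodd : Odd k := Nat.not_even_iff_odd.1 he
      have : (-1:ℝ)^(k+1) = 1 := (Odd.add_one hodd).neg_one_pow
      rw [this, mul_one]
      exact mul_nonneg (hW0 k hk hkK) (sq_nonneg _)
  suffices hgoal : 0 ≤ ∑ k ∈ Icc 1 K, W k * (-1:ℝ)^(k+1) * Real.sin ((k:ℝ)*u)^2 by
    simpa only [hWdef, hc] using hgoal
  rcases Nat.lt_or_ge K 2 with hK2 | hK2
  · interval_cases K
    · simp
    · rw [Finset.Icc_self, Finset.sum_singleton]
      have h1 := hW0 1 le_rfl le_rfl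
      have : ((-1:ℝ))^(1+1) = 1 := by norm_num
      rw [this, mul_one]
      exact mul_nonneg h1 (sq_nonneg _)
  have hifsum : ∀ m : ℕ, 1 ≤ m →
      -((∑ k ∈ Ioc m K, (if Even k then (k:ℝ)/(p:ℝ)^k else 0)) * s)
        ≤ ∑ k ∈ Ioc m K, W k * (-1:ℝ)^(k+1) * Real.sin ((k:ℝ)*u)^2 := by
    intro m hm
    rw [Finset.sum_mul, ← Finset.sum_neg_distrib]
    apply Finset.sum_le_sum
    intro k hk
    rw [Finset.mem_Ioc] at hk
    have h := hterm2 k (by omega) hk.2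
    by_cases he : Even k
    · simpa [he] using h
    · simpa [he] using h
  have hind : ∀ (m m₀ : ℕ), (∀ k : ℕ, m < k → Even k → m₀ ≤ k) →
      ∑ k ∈ Ioc m K, (if Even k then (k:ℝ)/(p:ℝ)^k else 0) ≤ ∑ k ∈ Icc m₀ K, (k:ℝ)/(p:ℝ)^k := by
    intro m m₀ hmm
    rw [← Finset.sum_filter]
    apply Finset.sum_le_sum_of_subset_of_nonneg
    · intro k hk
      simp only [Finset.mem_filter, Finset.mem_Ioc] at hk
      simp only [Finset.mem_Icc]
      exact ⟨hmm k hk.1.1 hk.2, hk.1.2⟩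
    · intro k _ _
      positivity
  have hc3 : Real.log 3 * c ≤ 1/324 := by
    have h81 : Real.log 81 = 4 * Real.log 3 := by
      rw [show (81:ℝ) = 3^4 by norm_num, Real.log_pow]
      norm_num
    have hlog3 : 0 < Real.log 3 := Real.log_pos (by norm_num)
    have hlx : Real.log 81 ≤ Real.log x := Real.log_le_log (by norm_num) hx
    have hxl : 324 * Real.log 3 ≤ x * Real.log x := by
      calc (324:ℝ) * Real.log 3 = 81 * Real.log 81 := by rw [h81]; ring
        _ ≤ x * Real.log x := by nlinarith
    rw [hc, mul_one_div, div_le_div_iff₀ hxlx (by norm_num : (0:ℝ) < 324)]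
    nlinarith
  have hsplit1 : ∑ k ∈ Icc 1 K, W k * (-1:ℝ)^(k+1) * Real.sin ((k:ℝ)*u)^2
      = W 1 * s + ∑ k ∈ Ioc 1 K, W k * (-1:ℝ)^(k+1) * Real.sin ((k:ℝ)*u)^2 := by
    rw [show Finset.Icc 1 K = Finset.Ioc 0 K from (Finset.Icc_add_one_left_eq_Ioc 0 K)]
    rw [← Finset.sum_Ioc_consecutive _ (by omega : (0:ℕ) ≤ 1) (by omega : (1:ℕ) ≤ K)]
    congr 1
    rw [show Finset.Ioc (0:ℕ) 1 = {1} from rfl, Finset.sum_singleton, hsdef]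
    norm_num
  rcases hp with hp2' | hp3' | hp5'
  · -- p = 2
    subst hp2'
    have hc2 : Real.log 2 * c ≤ 1/324 := by
      have h23 : Real.log 2 ≤ Real.log 3 := Real.log_le_log (by norm_num) (by norm_num)
      have := mul_le_mul_of_nonneg_right h23 hc0
      linarith
    have hc2' : 0 ≤ Real.log 2 * c := by positivity
    have hK6 : 6 ≤ K := by
      apply (hiff 6 (by norm_num)).1
      norm_num
      linarith
    have hsplit6 : ∑ k ∈ Icc 1 K, W k * (-1:ℝ)^(k+1) * Real.sin ((k:ℝ)*u)^2
        = (∑ k ∈ Ioc 0 6, W k * (-1:ℝ)^(k+1) * Real.sin ((k:ℝ)*u)^2)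
          + ∑ k ∈ Ioc 6 K, W k * (-1:ℝ)^(k+1) * Real.sin ((k:ℝ)*u)^2 := by
      rw [show Finset.Icc 1 K = Finset.Ioc 0 K from (Finset.Icc_add_one_left_eq_Ioc 0 K)]
      rw [← Finset.sum_Ioc_consecutive _ (by omega : (0:ℕ) ≤ 6) hK6]
    have hhead : ∑ k ∈ Ioc 0 6, W k * (-1:ℝ)^(k+1) * Real.sin ((k:ℝ)*u)^2
        = W 1 * s - W 2 * Real.sin (2*u)^2 + W 3 * Real.sin (3*u)^2
          - W 4 * Real.sin (4*u)^2 + W 5 * Real.sin (5*u)^2 - W 6 * Real.sin (6*u)^2 := by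
      rw [show Finset.Ioc (0:ℕ) 6 = {1,2,3,4,5,6} by decide]
      rw [Finset.sum_insert (by decide), Finset.sum_insert (by decide),
        Finset.sum_insert (by decide), Finset.sum_insert (by decide),
        Finset.sum_insert (by decide), Finset.sum_singleton]
      push_cast
      rw [hsdef]
      norm_num
      ring
    have hWe : ∀ k : ℕ, W k = 1/((k:ℝ)*2^k) - Real.log 2 * c := by
      intro k
      simp [hWdef]
    have hW1e : W 1 = 1/2 - Real.log 2 * c := by rw [hWe 1]; norm_num
    have hW2e : W 2 = 1/8 - Real.log 2 * c := by rw [hWe 2]; norm_num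
    have hW3e : W 3 = 1/24 - Real.log 2 * c := by rw [hWe 3]; norm_num
    have hW4e : W 4 = 1/64 - Real.log 2 * c := by rw [hWe 4]; norm_num
    have hW5e : W 5 = 1/160 - Real.log 2 * c := by rw [hWe 5]; norm_num
    have hW6e : W 6 = 1/384 - Real.log 2 * c := by rw [hWe 6]; norm_num
    have e2 : Real.sin (2*u)^2 = 4*(s*(1-s)) := by rw [sin_sq_two_mul, ← hsdef]
    have e3 : Real.sin (3*u)^2 = s*(3-4*s)^2 := by rw [sin_sq_three_mul, ← hsdef]
    have e4 : Real.sin (4*u)^2 = 16*(s*(1-s)*(1-2*s)^2) := by rw [sin_sq_four_mul, ← hsdef]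
    have e5 : Real.sin (5*u)^2 = s*(16*s^2-20*s+5)^2 := by
      have := sin_sq_five_mul u
      rw [← hsdef] at this
      rw [this]
    have b6 : Real.sin (6*u)^2 ≤ 4*(s*(3-4*s)^2) := by
      have := sin_sq_six_le u
      rwa [← hsdef] at this
    have htb : ∑ k ∈ Icc 8 K, (k:ℝ)/((2:ℕ):ℝ)^k ≤ 9/128 := by
      have h := tail_bound ((2:ℕ):ℝ) (by norm_num) 8 (by norm_num) K
      norm_num at h ⊢
      linarith
    have htail : -((9/128)*s) ≤ ∑ k ∈ Ioc 6 K, W k * (-1:ℝ)^(k+1) * Real.sin ((k:ℝ)*u)^2 := by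
      have h1 := hifsum 6 (by norm_num)
      have h2 := hind 6 8 (by intro k hk he; have := Nat.even_iff.1 he; omega)
      have h3 : (∑ k ∈ Ioc 6 K, (if Even k then (k:ℝ)/((2:ℕ):ℝ)^k else 0)) * s ≤ (9/128)*s :=
        mul_le_mul_of_nonneg_right (le_trans h2 htb) hs0
      linarith
    rw [hsplit6, hhead]
    have hub2 : W 2 ≤ 1/8 := by rw [hW2e]; linarith
    have hub4 : W 4 ≤ 1/64 := by rw [hW4e]; linarith
    have hub6 : W 6 ≤ 1/384 := by rw [hW6e]; linarith
    have hnn1 : (0:ℝ) ≤ s*(1-s) := mul_nonneg hs0 (by linarith)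
    have hb2 : W 2 * Real.sin (2*u)^2 ≤ (1/2)*(s*(1-s)) := by
      calc W 2 * Real.sin (2*u)^2 = W 2 * (4*(s*(1-s))) := by rw [e2]
        _ ≤ (1/8) * (4*(s*(1-s))) := mul_le_mul_of_nonneg_right hub2 (by linarith)
        _ = (1/2)*(s*(1-s)) := by ring
    have hnn4 : (0:ℝ) ≤ 16*(s*(1-s)*(1-2*s)^2) := by positivity
    have hb4 : W 4 * Real.sin (4*u)^2 ≤ (1/4)*(s*(1-s)*(1-2*s)^2) := by
      calc W 4 * Real.sin (4*u)^2 = W 4 * (16*(s*(1-s)*(1-2*s)^2)) := by rw [e4]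
        _ ≤ (1/64) * (16*(s*(1-s)*(1-2*s)^2)) := mul_le_mul_of_nonneg_right hub4 hnn4
        _ = (1/4)*(s*(1-s)*(1-2*s)^2) := by ring
    have hb6 : W 6 * Real.sin (6*u)^2 ≤ (1/96)*(s*(3-4*s)^2) := by
      have hW60 := hW0 6 (by norm_num) (by omega)
      calc W 6 * Real.sin (6*u)^2 ≤ (1/384) * (4*(s*(3-4*s)^2)) :=
            mul_le_mul hub6 b6 (sq_nonneg _) (by norm_num)
        _ = (1/96)*(s*(3-4*s)^2) := by ring
    have hg1 : W 1 * s = (1/2 - Real.log 2 * c)*s := by rw [hW1e]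
    have hg3 : W 3 * Real.sin (3*u)^2 = (1/24 - Real.log 2 * c)*(s*(3-4*s)^2) := by
      rw [hW3e, e3]
    have hg5 : W 5 * Real.sin (5*u)^2 = (1/160 - Real.log 2 * c)*(s*(16*s^2-20*s+5)^2) := by
      rw [hW5e, e5]
    have hpoly := poly2 s (Real.log 2 * c) hs0 hs1 hc2' hc2
    linarith only [hg1, hg3, hg5, hb2, hb4, hb6, htail, hpoly]
  · -- p = 3
    subst hp3'
    rw [hsplit1]
    have hsplit2 : ∑ k ∈ Ioc 1 K, W k * (-1:ℝ)^(k+1) * Real.sin ((k:ℝ)*u)^2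
        = W 2 * (-1:ℝ)^(2+1) * Real.sin (((2:ℕ):ℝ)*u)^2
          + ∑ k ∈ Ioc 2 K, W k * (-1:ℝ)^(k+1) * Real.sin ((k:ℝ)*u)^2 := by
      rw [← Finset.sum_Ioc_consecutive _ (by omega : (1:ℕ) ≤ 2) hK2]
      congr 1
      rw [show Finset.Ioc (1:ℕ) 2 = {2} from rfl, Finset.sum_singleton]
    rw [hsplit2]
    have hg2 : W 2 * (-1:ℝ)^(2+1) * Real.sin (((2:ℕ):ℝ)*u)^2
        = -(W 2 * Real.sin (2*u)^2) := by
      push_cast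
      ring_nf
    have hub2 : W 2 ≤ 1/18 := by
      have := hWub 2
      norm_num at this
      linarith
    have e2 : Real.sin (2*u)^2 = 4*(s*(1-s)) := by rw [sin_sq_two_mul, ← hsdef]
    have hss : (0:ℝ) ≤ s*s := mul_nonneg hs0 hs0
    have hb2 : W 2 * Real.sin (2*u)^2 ≤ (1/18)*(4*s) := by
      have hW20 := hW0 2 (by norm_num) (by omega)
      calc W 2 * Real.sin (2*u)^2 ≤ (1/18) * Real.sin (2*u)^2 :=
            mul_le_mul_of_nonneg_right hub2 (sq_nonneg _)
        _ ≤ (1/18)*(4*s) := by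
            rw [e2]
            nlinarith [hss]
    have htb : ∑ k ∈ Icc 4 K, (k:ℝ)/((3:ℕ):ℝ)^k ≤ 1/12 := by
      have h := tail_bound ((3:ℕ):ℝ) (by norm_num) 4 (by norm_num) K
      norm_num at h ⊢
      linarith
    have htail : -((1/12)*s) ≤ ∑ k ∈ Ioc 2 K, W k * (-1:ℝ)^(k+1) * Real.sin ((k:ℝ)*u)^2 := by
      have h1 := hifsum 2 (by norm_num)
      have h2 := hind 2 4 (by intro k hk he; have := Nat.even_iff.1 he; omega)
      have h3 : (∑ k ∈ Ioc 2 K, (if Even k then (k:ℝ)/((3:ℕ):ℝ)^k else 0)) * s ≤ (1/12)*s :=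
        mul_le_mul_of_nonneg_right (le_trans h2 htb) hs0
      linarith
    have hW1lb : 1/3 - 1/324 ≤ W 1 := by
      have hW1e : W 1 = 1/3 - Real.log 3 * c := by
        rw [hWdef]
        norm_num
      rw [hW1e]
      linarith
    have hW1s : (1/3 - 1/324)*s ≤ W 1 * s := mul_le_mul_of_nonneg_right hW1lb hs0
    rw [hg2]
    linarith only [hW1s, hb2, htail, hs0]
  · -- p ≥ 5
    have hp5R : (5:ℝ) ≤ (p:ℝ) := by exact_mod_cast hp5'
    have hx2 : (p:ℝ)^2 ≤ x := (hiff 2 (by norm_num)).2 hK2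
    have hxinv : 1/x ≤ 1/(p:ℝ)^2 := one_div_le_one_div_of_le (by positivity) hx2
    have hpx : (p:ℝ) ≤ x := by
      have := (hiff 1 le_rfl).2 (by omega)
      rw [pow_one] at this
      exact this
    have hlpc : Real.log p * c ≤ 1/x := by
      have h1 : Real.log p ≤ Real.log x := Real.log_le_log (by linarith) hpx
      rw [hc, mul_one_div, div_le_div_iff₀ hxlx (by linarith : (0:ℝ) < x)]
      nlinarith
    have hb : ∑ k ∈ Icc 2 K, (k:ℝ)/(p:ℝ)^k ≤ (2+1/((p:ℝ)-1))/((p:ℝ)*((p:ℝ)-1)) := by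
      have h := tail_bound (p:ℝ) hpR 2 (by norm_num) K
      norm_num at h ⊢
      linarith
    have hnum := p5_num (p:ℝ) hp5R
    rw [hsplit1]
    have h1 := hifsum 1 le_rfl
    have h2 := hind 1 2 (by intro k hk he; omega)
    have h3 : (∑ k ∈ Ioc 1 K, (if Even k then (k:ℝ)/(p:ℝ)^k else 0)) * s
        ≤ (1/(p:ℝ) - 1/(p:ℝ)^2)*s :=
      mul_le_mul_of_nonneg_right (le_trans h2 (le_trans hb hnum)) hs0
    have hW1e : W 1 = 1/(p:ℝ) - Real.log p * c := by
      rw [hWdef]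
      norm_num
    have h4 : (1/(p:ℝ) - 1/(p:ℝ)^2)*s ≤ W 1 * s := by
      apply mul_le_mul_of_nonneg_right _ hs0
      rw [hW1e]
      linarith
    linarith only [h1, h3, h4]

open scoped Classical in
/-- For all real `x ≥ 81` and all real `t`,
`Re Σ_{n≤x} Λ(n) n^{−it} (1/(n log n) − 1/(x log x))
 ≥ Σ_{p^k ≤ x} (log p)(−1)^k (1/(p^k log p^k) − 1/(x log x))`,
the right-hand sum running over all primes `p` and integers `k ≥ 1` with `p^k ≤ x`. -/
theorem twisted_vonMangoldt_ge_alternating (x t : ℝ) (hx : 81 ≤ x) :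
    (∑ n ∈ Finset.Icc 1 ⌊x⌋₊,
        (ArithmeticFunction.vonMangoldt n : ℂ) * (n : ℂ) ^ (-(t : ℂ) * I) *
          ((1 / (n * Real.log n) - 1 / (x * Real.log x) : ℝ) : ℂ)).re
      ≥ ∑ p ∈ (Finset.Icc 1 ⌊x⌋₊).filter Nat.Prime,
          ∑ k ∈ (Finset.Icc 1 ⌊x⌋₊).filter (fun k => (p : ℝ) ^ k ≤ x),
            Real.log p * (-1 : ℝ) ^ k *
              (1 / ((p : ℝ) ^ k * Real.log ((p : ℝ) ^ k)) - 1 / (x * Real.log x)) := by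
  have hx0 : (0:ℝ) ≤ x := by linarith
  have hx1 : (1:ℝ) < x := by linarith
  have hN81 : 81 ≤ ⌊x⌋₊ := Nat.le_floor (by exact_mod_cast hx)
  have hN0 : ⌊x⌋₊ ≠ 0 := by omega
  have hNx : ((⌊x⌋₊ : ℕ) : ℝ) ≤ x := Nat.floor_le hx0
  -- Step A : real part of the sum
  have stepA : (∑ n ∈ Finset.Icc 1 ⌊x⌋₊,
        (ArithmeticFunction.vonMangoldt n : ℂ) * (n : ℂ) ^ (-(t : ℂ) * I) *
          ((1 / (n * Real.log n) - 1 / (x * Real.log x) : ℝ) : ℂ)).re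
      = ∑ n ∈ Finset.Icc 1 ⌊x⌋₊, ArithmeticFunction.vonMangoldt n
          * Real.cos (t * Real.log n)
          * (1 / (n * Real.log n) - 1 / (x * Real.log x)) := by
    rw [Complex.re_sum]
    apply Finset.sum_congr rfl
    intro n hn
    rw [Finset.mem_Icc] at hn
    have hn1 : 1 ≤ n := hn.1
    have hnne : (n:ℂ) ≠ 0 := Nat.cast_ne_zero.2 (by omega)
    have hcpow : (n:ℂ) ^ (-(t:ℂ)*I) = Complex.exp (((-(t * Real.log n) : ℝ) : ℂ) * I) := by
      rw [Complex.cpow_def_of_ne_zero hnne]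
      congr 1
      rw [← Complex.natCast_log]
      push_cast
      ring
    rw [hcpow]
    have : ∀ (a b : ℝ) (z : ℂ), ((a:ℂ) * z * (b:ℂ)).re = a * z.re * b := by
      intro a b z
      simp [Complex.mul_re]
    rw [this, Complex.exp_ofReal_mul_I_re, Real.cos_neg]
  rw [stepA]
  -- Step B : restrict to prime powers
  have stepB : ∑ n ∈ Finset.Icc 1 ⌊x⌋₊, ArithmeticFunction.vonMangoldt n
          * Real.cos (t * Real.log n) * (1 / (n * Real.log n) - 1 / (x * Real.log x))
      = ∑ n ∈ (Finset.Icc 1 ⌊x⌋₊).filter IsPrimePow, ArithmeticFunction.vonMangoldt n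
          * Real.cos (t * Real.log n) * (1 / (n * Real.log n) - 1 / (x * Real.log x)) := by
    symm
    apply Finset.sum_filter_of_ne
    intro n _ hF
    by_contra hpp
    have h0 : ArithmeticFunction.vonMangoldt n = 0 :=
      ArithmeticFunction.vonMangoldt_eq_zero_iff.2 hpp
    rw [h0] at hF
    simp at hF
  rw [stepB]
  -- Step C : reindex by (p, k)
  have stepC : ∑ n ∈ (Finset.Icc 1 ⌊x⌋₊).filter IsPrimePow, ArithmeticFunction.vonMangoldt n
          * Real.cos (t * Real.log n) * (1 / (n * Real.log n) - 1 / (x * Real.log x))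
      = ∑ p ∈ (Finset.Icc 1 ⌊x⌋₊).filter Nat.Prime,
          ∑ k ∈ (Finset.Icc 1 ⌊x⌋₊).filter (fun k => (p : ℝ) ^ k ≤ x),
            Real.log p * Real.cos (t * Real.log ((p:ℝ)^k))
              * (1 / ((p:ℝ)^k * Real.log ((p:ℝ)^k)) - 1 / (x * Real.log x)) := by
    rw [Finset.sum_sigma']
    symm
    apply Finset.sum_nbij' (i := fun q : Σ _ : ℕ, ℕ => q.1 ^ q.2)
      (j := fun n => ⟨n.minFac, n.factorization n.minFac⟩)
    · -- hi : maps into target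
      rintro ⟨p, k⟩ hq
      simp only [Finset.mem_sigma, Finset.mem_filter, Finset.mem_Icc] at hq
      obtain ⟨⟨⟨hp1, hpN⟩, hpp⟩, ⟨hk1, hkN⟩, hpkx⟩ := hq
      simp only [Finset.mem_filter, Finset.mem_Icc]
      have hpkN : p ^ k ≤ ⌊x⌋₊ := by
        apply Nat.le_floor
        push_cast
        exact_mod_cast hpkx
      refine ⟨⟨Nat.one_le_pow _ _ hpp.pos, hpkN⟩, ?_⟩
      exact ⟨p, k, hpp.prime, by omega, rfl⟩
    · -- hj
      intro n hn
      simp only [Finset.mem_filter, Finset.mem_Icc] at hn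
      obtain ⟨⟨hn1, hnN⟩, hpp⟩ := hn
      obtain ⟨p, k, hp, hk, rfl⟩ := (isPrimePow_nat_iff _).1 hpp
      rw [hp.pow_minFac (by omega), hp.factorization_pow, Finsupp.single_eq_same]
      simp only [Finset.mem_sigma, Finset.mem_filter, Finset.mem_Icc]
      have hp2 : 2 ≤ p := hp.two_le
      have hpk : p ≤ p ^ k := Nat.le_self_pow (by omega) p
      have h2k : k < 2 ^ k := Nat.lt_two_pow_self
      have h2p : 2 ^ k ≤ p ^ k := Nat.pow_le_pow_left hp.two_le k
      refine ⟨⟨⟨by omega, by omega⟩, hp⟩, ⟨by omega, by omega⟩, ?_⟩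
      calc (p:ℝ)^k = ((p^k : ℕ) : ℝ) := by push_cast; ring
        _ ≤ (⌊x⌋₊ : ℝ) := by exact_mod_cast hnN
        _ ≤ x := hNx
    · -- left inverse
      rintro ⟨p, k⟩ hq
      simp only [Finset.mem_sigma, Finset.mem_filter, Finset.mem_Icc] at hq
      obtain ⟨⟨⟨hp1, hpN⟩, hpp⟩, ⟨hk1, hkN⟩, hpkx⟩ := hq
      have h1 : (p ^ k).minFac = p := hpp.pow_minFac (by omega)
      have h2 : (p ^ k).factorization p = k := by
        rw [hpp.factorization_pow, Finsupp.single_eq_same]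
      simp only [h1, h2]
    · -- right inverse
      intro n hn
      simp only [Finset.mem_filter, Finset.mem_Icc] at hn
      obtain ⟨⟨hn1, hnN⟩, hpp⟩ := hn
      obtain ⟨p, k, hp, hk, rfl⟩ := (isPrimePow_nat_iff _).1 hpp
      rw [hp.pow_minFac (by omega), hp.factorization_pow, Finsupp.single_eq_same]
    · -- values agree
      rintro ⟨p, k⟩ hq
      simp only [Finset.mem_sigma, Finset.mem_filter, Finset.mem_Icc] at hq
      obtain ⟨⟨⟨hp1, hpN⟩, hpp⟩, ⟨hk1, hkN⟩, hpkx⟩ := hq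
      have hΛ : ArithmeticFunction.vonMangoldt (p ^ k) = Real.log p := by
        rw [ArithmeticFunction.vonMangoldt_apply_pow (by omega),
          ArithmeticFunction.vonMangoldt_apply_prime hpp]
      rw [hΛ]
      have hcast : ((p ^ k : ℕ) : ℝ) = (p:ℝ)^k := by push_cast; ring
      rw [hcast]
  rw [stepC]
  -- Step D : per-prime comparison
  apply Finset.sum_le_sum
  intro p hpmem
  simp only [Finset.mem_filter, Finset.mem_Icc] at hpmem
  obtain ⟨⟨hp1, hpN⟩, hpp⟩ := hpmem
  have hp2 : 2 ≤ p := hpp.two_le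
  have hpcases : p = 2 ∨ p = 3 ∨ 5 ≤ p := by
    rcases Nat.lt_or_ge p 5 with h | h
    · interval_cases p
      · exact Or.inl rfl
      · exact Or.inr (Or.inl rfl)
      · exact absurd hpp (by norm_num)
    · exact Or.inr (Or.inr h)
  have hiff : ∀ k : ℕ, 1 ≤ k → ((p:ℝ)^k ≤ x ↔ k ≤ Nat.log p ⌊x⌋₊) := by
    intro k _
    rw [show (p:ℝ)^k = ((p^k : ℕ) : ℝ) by push_cast; ring]
    rw [← Nat.le_floor_iff hx0]
    exact (Nat.le_log_iff_pow_le (by omega) hN0).symm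
  have hKpset : (Finset.Icc 1 ⌊x⌋₊).filter (fun k => (p : ℝ) ^ k ≤ x)
      = Finset.Icc 1 (Nat.log p ⌊x⌋₊) := by
    ext k
    simp only [Finset.mem_filter, Finset.mem_Icc]
    constructor
    · rintro ⟨⟨h1, h2⟩, h3⟩
      exact ⟨h1, (hiff k h1).1 h3⟩
    · rintro ⟨h1, h2⟩
      have h3 : (p:ℝ)^k ≤ x := (hiff k h1).2 h2
      have hpkN : p ^ k ≤ ⌊x⌋₊ := by
        apply Nat.le_floor
        exact_mod_cast h3
      have h2k : k < 2 ^ k := Nat.lt_two_pow_self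
      have h2p : 2 ^ k ≤ p ^ k := Nat.pow_le_pow_left hp2 k
      exact ⟨⟨h1, by omega⟩, h3⟩
  rw [hKpset]
  rw [← sub_nonneg, ← Finset.sum_sub_distrib]
  have hlogp : 0 < Real.log p := Real.log_pos (by exact_mod_cast hp2)
  have heq : ∀ k ∈ Finset.Icc 1 (Nat.log p ⌊x⌋₊),
      Real.log p * Real.cos (t * Real.log ((p:ℝ)^k))
          * (1 / ((p:ℝ)^k * Real.log ((p:ℝ)^k)) - 1 / (x * Real.log x))
        - Real.log p * (-1:ℝ)^k
          * (1 / ((p:ℝ)^k * Real.log ((p:ℝ)^k)) - 1 / (x * Real.log x))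
      = 2 * ((1/((k:ℝ)*(p:ℝ)^k) - Real.log p * (1/(x*Real.log x))) * (-1:ℝ)^(k+1)
          * Real.sin ((k:ℝ)*((t * Real.log p + Real.pi)/2))^2) := by
    intro k hk
    rw [Finset.mem_Icc] at hk
    have hk1 : 1 ≤ k := hk.1
    have hkR : (0:ℝ) < (k:ℝ) := by exact_mod_cast hk1
    have hpk0 : (0:ℝ) < (p:ℝ)^k := by positivity
    have hlogpk : Real.log ((p:ℝ)^k) = (k:ℝ) * Real.log p := by rw [Real.log_pow]
    -- the cosine identity
    have hu : t * Real.log ((p:ℝ)^k)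
        = 2 * ((k:ℝ)*((t * Real.log p + Real.pi)/2)) - (k:ℝ) * Real.pi := by
      rw [hlogpk]; ring
    have hcos2 : Real.cos (2 * ((k:ℝ)*((t * Real.log p + Real.pi)/2)))
        = 1 - 2 * Real.sin ((k:ℝ)*((t * Real.log p + Real.pi)/2))^2 := by
      rw [Real.cos_two_mul]
      have := Real.sin_sq_add_cos_sq ((k:ℝ)*((t * Real.log p + Real.pi)/2))
      linarith
    have hcosk : Real.cos ((k:ℝ) * Real.pi) = (-1:ℝ)^k := by
      have := Real.cos_nat_mul_pi_sub 0 k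
      simpa using this
    have hsink : Real.sin ((k:ℝ) * Real.pi) = 0 := Real.sin_nat_mul_pi k
    have hcos : Real.cos (t * Real.log ((p:ℝ)^k))
        = (-1:ℝ)^k * (1 - 2 * Real.sin ((k:ℝ)*((t * Real.log p + Real.pi)/2))^2) := by
      rw [hu, Real.cos_sub, hcosk, hsink, hcos2]
      ring
    rw [hcos, hlogpk]
    have hw : Real.log p * (1 / ((p:ℝ)^k * ((k:ℝ) * Real.log p)) - 1 / (x * Real.log x))
        = 1/((k:ℝ)*(p:ℝ)^k) - Real.log p * (1/(x*Real.log x)) := by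
      rw [mul_sub]
      congr 1
      rw [mul_one_div]
      rw [div_eq_div_iff (by positivity) (by positivity)]
      ring
    have expand : Real.log p * ((-1:ℝ)^k * (1 - 2 * Real.sin ((k:ℝ)*((t * Real.log p + Real.pi)/2))^2))
          * (1 / ((p:ℝ)^k * ((k:ℝ) * Real.log p)) - 1 / (x * Real.log x))
        - Real.log p * (-1:ℝ)^k * (1 / ((p:ℝ)^k * ((k:ℝ) * Real.log p)) - 1 / (x * Real.log x))
      = (Real.log p * (1 / ((p:ℝ)^k * ((k:ℝ) * Real.log p)) - 1 / (x * Real.log x)))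
          * ((-1:ℝ)^k * (-2 * Real.sin ((k:ℝ)*((t * Real.log p + Real.pi)/2))^2)) := by
      ring
    rw [expand, hw]
    rw [pow_succ]
    ring
  rw [Finset.sum_congr rfl heq, ← Finset.mul_sum]
  have hkey := keyPrime p (Nat.log p ⌊x⌋₊) hpcases x ((t * Real.log p + Real.pi)/2) hx hiff
  linarith
end
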